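/- Define F₁(H,σ) := (1 − H²)·(−(9/8)(σ² + H²) − (3/4)Hσ − (1/3)(1 − H²)) and F₂(H,σ) := (9/8)σ² − (9/4)Hσ − (1/3)(1 − H²) − (15/8)H² − Hσ·(−(9/8)(σ² + H²) − (3/4)Hσ − (1/3)(1 − H²)), and let L(H,σ) be the 2×2 matrix of partial derivatives (∂F₁/∂H, ∂F₁/∂σ; ∂F₂/∂H, ∂F₂/∂σ). Then the characteristic polynomial of L at A = (−1, 5/3) is (X + 6)(X + 2); at B = (−1, 1) it is (X − 3/2)(X + 3); at C = (−1, −1) it is (X + 6)²; at D = (1, −5/3) it is (X − 2)(X − 6); at E = (1, −1) it is (X + 3/2)(X − 3); and at F = (1, 1) it is (X − 6)². In particular A and C are sinks, D and F are sources, and B and E are saddle points of the linearized system. -/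

import Mathlib

open Polynomial

/-- First component of the compactified expansion-normalised vector field. -/
noncomputable def F₁ (H σ : ℝ) : ℝ :=
  (1 - H ^ 2) * (-(9 / 8) * (σ ^ 2 + H ^ 2) - (3 / 4) * (H * σ) - (1 / 3) * (1 - H ^ 2))

/-- Second component of the compactified expansion-normalised vector field. -/
noncomputable def F₂ (H σ : ℝ) : ℝ :=
  (9 / 8) * σ ^ 2 - (9 / 4) * (H * σ) - (1 / 3) * (1 - H ^ 2) - (15 / 8) * H ^ 2
    - H * σ * (-(9 / 8) * (σ ^ 2 + H ^ 2) - (3 / 4) * (H * σ) - (1 / 3) * (1 - H ^ 2))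

/-- The Jacobian matrix of `(F₁, F₂)` at `(H, σ)`. -/
noncomputable def L (H σ : ℝ) : Matrix (Fin 2) (Fin 2) ℝ :=
  !![deriv (fun x => F₁ x σ) H, deriv (fun y => F₁ H y) σ;
     deriv (fun x => F₂ x σ) H, deriv (fun y => F₂ H y) σ]

/-! All six equilibria lie on the lines `H = ±1`, where the factor `1 - H ^ 2` of `F₁` vanishes
identically in `σ`. There `∂F₁/∂σ = 0`, so the Jacobian is lower triangular and its eigenvalues
are its diagonal entries `∂F₁/∂H` and `∂F₂/∂σ`, explicit polynomials in `σ`. Evaluating them at the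
six points gives the factorisations, and the signs of the roots can be read off. -/

theorem Matrix.charpoly_fin_two_of_apply_zero_one_eq_zero {R : Type*} [CommRing R] [Nontrivial R]
    (M : Matrix (Fin 2) (Fin 2) R) (h : M 0 1 = 0) :
    M.charpoly = (X - C (M 0 0)) * (X - C (M 1 1)) := by
  rw [M.charpoly_fin_two, Matrix.trace_fin_two, Matrix.det_fin_two, h]
  simp only [C_add, C_sub, C_mul, C_0]
  ring

theorem Polynomial.forall_isRoot_X_sub_C_mul_X_sub_C_imp {R : Type*} [CommRing R] [IsDomain R]
    {a b : R} {P : R → Prop} :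
    (∀ x, ((X - C a) * (X - C b)).IsRoot x → P x) ↔ P a ∧ P b := by
  simp only [IsRoot.def, eval_mul, eval_sub, eval_X, eval_C, mul_eq_zero, sub_eq_zero]
  grind

theorem Polynomial.exists_isRoot_X_sub_C_mul_X_sub_C_neg_pos {R : Type*} [CommRing R] [LT R]
    {a b : R} (ha : a < 0) (hb : 0 < b) :
    ∃ x y : R, ((X - C a) * (X - C b)).IsRoot x ∧ ((X - C a) * (X - C b)).IsRoot y ∧
      x < 0 ∧ 0 < y :=
  ⟨a, b, by simp, by simp, ha, hb⟩

theorem deriv_F₁_fst (H σ : ℝ) : deriv (fun x => F₁ x σ) H =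
    -2 * H * (-(9 / 8) * (σ ^ 2 + H ^ 2) - (3 / 4) * (H * σ) - (1 / 3) * (1 - H ^ 2))
      + (1 - H ^ 2) * (-(19 / 12) * H - (3 / 4) * σ) := by
  unfold F₁
  simp (disch := fun_prop) only [deriv_fun_mul, deriv_fun_sub, deriv_fun_add, deriv_const',
    deriv_pow_field, deriv_id'']
  ring

theorem deriv_F₁_snd (H σ : ℝ) :
    deriv (fun y => F₁ H y) σ = (1 - H ^ 2) * (-(9 / 4) * σ - (3 / 4) * H) := by
  unfold F₁
  simp (disch := fun_prop) only [deriv_fun_mul, deriv_fun_sub, deriv_fun_add, deriv_const',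
    deriv_pow_field, deriv_const_mul_id']
  ring

theorem deriv_F₂_snd (H σ : ℝ) : deriv (fun y => F₂ H y) σ = (9 / 4) * σ - (9 / 4) * H
    - H * (-(9 / 8) * (σ ^ 2 + H ^ 2) - (3 / 4) * (H * σ) - (1 / 3) * (1 - H ^ 2))
    + H * σ * ((9 / 4) * σ + (3 / 4) * H) := by
  unfold F₂
  simp (disch := fun_prop) only [deriv_fun_mul, deriv_fun_sub, deriv_fun_add, deriv_const',
    deriv_pow_field, deriv_const_mul_id']
  ring

theorem charpoly_L_of_sq_eq_one {H : ℝ} (σ : ℝ) (hH : H ^ 2 = 1) :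
    (L H σ).charpoly = (X - C ((9 / 4) * H * (σ ^ 2 + 1) + (3 / 2) * σ)) *
      (X - C ((27 / 8) * H * σ ^ 2 + (15 / 4) * σ - (9 / 8) * H)) := by
  rw [Matrix.charpoly_fin_two_of_apply_zero_one_eq_zero _ (by simp [L, deriv_F₁_snd, hH])]
  simp only [L, Matrix.of_apply, Matrix.cons_val', Matrix.cons_val_zero, Matrix.cons_val_one,
    Matrix.empty_val', Matrix.cons_val_fin_one, deriv_F₁_fst, deriv_F₂_snd]
  congr 3
  · linear_combination ((19 / 6) * H + (9 / 4) * σ) * hH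
  · linear_combination ((19 / 24) * H + (3 / 2) * σ) * hH

theorem linearization_at_equilibria :
    (L (-1) (5 / 3)).charpoly = (X + C 6) * (X + C 2) ∧
    (L (-1) 1).charpoly = (X - C (3 / 2)) * (X + C 3) ∧
    (L (-1) (-1)).charpoly = (X + C 6) ^ 2 ∧
    (L 1 (-5 / 3)).charpoly = (X - C 2) * (X - C 6) ∧
    (L 1 (-1)).charpoly = (X + C (3 / 2)) * (X - C 3) ∧
    (L 1 1).charpoly = (X - C 6) ^ 2 ∧
    (∀ x : ℝ, (L (-1) (5 / 3)).charpoly.IsRoot x → x < 0) ∧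
    (∀ x : ℝ, (L (-1) (-1)).charpoly.IsRoot x → x < 0) ∧
    (∀ x : ℝ, (L 1 (-5 / 3)).charpoly.IsRoot x → 0 < x) ∧
    (∀ x : ℝ, (L 1 1).charpoly.IsRoot x → 0 < x) ∧
    (∃ x y : ℝ, (L (-1) 1).charpoly.IsRoot x ∧ (L (-1) 1).charpoly.IsRoot y ∧
      x < 0 ∧ 0 < y) ∧
    (∃ x y : ℝ, (L 1 (-1)).charpoly.IsRoot x ∧ (L 1 (-1)).charpoly.IsRoot y ∧
      x < 0 ∧ 0 < y) := by
  have hA : (L (-1) (5 / 3)).charpoly = (X - C (-6)) * (X - C (-2)) := by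
    rw [charpoly_L_of_sq_eq_one _ (by norm_num)]; norm_num
  have hB : (L (-1) 1).charpoly = (X - C (-3)) * (X - C (3 / 2)) := by
    rw [charpoly_L_of_sq_eq_one _ (by norm_num)]; norm_num
  have hC : (L (-1) (-1)).charpoly = (X - C (-6)) * (X - C (-6)) := by
    rw [charpoly_L_of_sq_eq_one _ (by norm_num)]; norm_num
  have hD : (L 1 (-5 / 3)).charpoly = (X - C 6) * (X - C 2) := by
    rw [charpoly_L_of_sq_eq_one _ (by norm_num)]; norm_num
  have hE : (L 1 (-1)).charpoly = (X - C (-(3 / 2))) * (X - C 3) := by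
    rw [charpoly_L_of_sq_eq_one _ (by norm_num), mul_comm]; norm_num
  have hF : (L 1 1).charpoly = (X - C 6) * (X - C 6) := by
    rw [charpoly_L_of_sq_eq_one _ (by norm_num)]; norm_num
  simp only [hA, hB, hC, hD, hE, hF, forall_isRoot_X_sub_C_mul_X_sub_C_imp]
  refine ⟨?_, ?_, ?_, ?_, ?_, ?_, by norm_num, by norm_num, by norm_num, by norm_num,
    exists_isRoot_X_sub_C_mul_X_sub_C_neg_pos (by norm_num) (by norm_num),
    exists_isRoot_X_sub_C_mul_X_sub_C_neg_pos (by norm_num) (by norm_num)⟩ <;>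
  (try simp only [map_neg, sub_neg_eq_add]) <;> ring
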